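/- For the planar 5-vortex problem (A = 2), consider the unique non-regular symmetric equilateral pentagonal central configuration, normalized so that m1 = m2 = 1, with m4 the mass given by a positive root of 64m⁹ - 752m⁸ + 2316m⁷ - 109m⁶ - 2830m⁵ + 45m⁴ + 1362m³ + 215m² - 149m - 17. Then this polynomial has a root in (0.34, 0.35) and no root in [1, ∞). -/
import Mathlib

/-- The mass polynomial of the non-regular symmetric equilateral pentagonal
central configuration of the planar 5-vortex problem (`A = 2`, `m1 = m2 = 1`). -/
noncomputable def massPoly (m : ℝ) : ℝ :=
  64*m^9 - 752*m^8 + 2316*m^7 - 109*m^6 - 2830*m^5 + 45*m^4 + 1362*m^3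
    + 215*m^2 - 149*m - 17

lemma massPoly_cont : Continuous massPoly := by
  unfold massPoly; continuity

lemma massPoly_pos_of_one_le {m : ℝ} (hm : 1 ≤ m) : 0 < massPoly m := by
  rcases le_or_gt m (28/5) with h | h
  · have hu : (0:ℝ) ≤ m - 1 := by linarith
    have hv : (0:ℝ) ≤ 28/5 - m := by linarith
    have key : massPoly m = 145 +
        ((201171875/78310985281 : ℝ) * (m-1)^1 * (28/5-m)^8
        + (9731250000/78310985281) * (m-1)^2 * (28/5-m)^7
        + (189660843750/78310985281) * (m-1)^3 * (28/5-m)^6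
        + (1733600212500/78310985281) * (m-1)^4 * (28/5-m)^5
        + (8091696665000/78310985281) * (m-1)^5 * (28/5-m)^4
        + (18834994921125/78310985281) * (m-1)^6 * (28/5-m)^3
        + (17478165153525/78310985281) * (m-1)^7 * (28/5-m)^2
        + (225340435315/78310985281) * (m-1)^8 * (28/5-m)^1
        + (55846042774/78310985281) * (m-1)^9) := by
      unfold massPoly; ring
    have hterm : (0:ℝ) ≤
        ((201171875/78310985281 : ℝ) * (m-1)^1 * (28/5-m)^8
        + (9731250000/78310985281) * (m-1)^2 * (28/5-m)^7
        + (189660843750/78310985281) * (m-1)^3 * (28/5-m)^6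
        + (1733600212500/78310985281) * (m-1)^4 * (28/5-m)^5
        + (8091696665000/78310985281) * (m-1)^5 * (28/5-m)^4
        + (18834994921125/78310985281) * (m-1)^6 * (28/5-m)^3
        + (17478165153525/78310985281) * (m-1)^7 * (28/5-m)^2
        + (225340435315/78310985281) * (m-1)^8 * (28/5-m)^1
        + (55846042774/78310985281) * (m-1)^9) := by
      positivity
    linarith
  · have ht : (0:ℝ) ≤ m - 28/5 := by linarith
    have key : massPoly m = 1284742186927/1953125 +
        ((277273949651/390625 : ℝ) * (m-28/5)^1
        + (768952139603/78125) * (m-28/5)^2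
        + (192615683474/15625) * (m-28/5)^3
        + (21084961977/3125) * (m-28/5)^4
        + (1283580714/625) * (m-28/5)^5
        + (46809207/125) * (m-28/5)^6
        + (1021996/25) * (m-28/5)^7
        + (12368/5) * (m-28/5)^8
        + 64 * (m-28/5)^9) := by
      unfold massPoly; ring
    have hterm : (0:ℝ) ≤
        ((277273949651/390625 : ℝ) * (m-28/5)^1
        + (768952139603/78125) * (m-28/5)^2
        + (192615683474/15625) * (m-28/5)^3
        + (21084961977/3125) * (m-28/5)^4
        + (1283580714/625) * (m-28/5)^5
        + (46809207/125) * (m-28/5)^6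
        + (1021996/25) * (m-28/5)^7
        + (12368/5) * (m-28/5)^8
        + 64 * (m-28/5)^9) := by
      positivity
    linarith

/-- Real-root isolation for the vortex mass polynomial: it has a root in
`(0.34, 0.35)` and no root in `[1, ∞)`. -/
theorem stmt_19 :
    (∃ m : ℝ, 0.34 < m ∧ m < 0.35 ∧ massPoly m = 0) ∧
    (∀ m : ℝ, 1 ≤ m → massPoly m ≠ 0) := by
  constructor
  · have hab : (0.34 : ℝ) ≤ 0.35 := by norm_num
    have hcont : ContinuousOn massPoly (Set.Icc (0.34:ℝ) 0.35) :=
      massPoly_cont.continuousOn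
    have hsub := intermediate_value_Ioo hab hcont
    have h0 : (0:ℝ) ∈ Set.Ioo (massPoly 0.34) (massPoly 0.35) := by
      constructor
      · unfold massPoly; norm_num
      · unfold massPoly; norm_num
    obtain ⟨m, hm, hm0⟩ := hsub h0
    exact ⟨m, hm.1, hm.2, hm0⟩
  · intro m hm
    exact ne_of_gt (massPoly_pos_of_one_le hm)
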